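/- arXiv:1103.4479 — 6 statements merged into one kernel-verified Lean document; each statement's English description precedes it below -/
import Mathlib

section
/- If S, E, I, R satisfy the SEIR system with nonnegative parameters μ, ω, β, σ, γ ≥ 0, N > 0, vaccination V(t) ∈ [0,1] for all t ≥ 0, and nonnegative initial conditions min(S(0),E(0),I(0),R(0)) ≥ 0, then S(t), E(t), I(t), R(t) ≥ 0 for all t ≥ 0. -/
/-!
On the face `{x i = -P}` of the shifted orthant `{x ≥ -P}`, the `i`-th component of the SEIR
vector field is at least `-K P`, where `K` depends only on the parameters and on a bound for `S`
and `I` on `[0, t]`. Hence whenever one of `S, E, I, R` plus `ε e^{(K+1)s}` vanishes while the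
other shifted components are nonnegative, its derivative is positive, so by continuous induction
the shifted components stay nonnegative on `[0, t]`; then let `ε → 0`.
-/

open Set Filter Topology Real

theorem HasDerivWithinAt.eventually_lt_right_of_pos {f : ℝ → ℝ} {f' x : ℝ}
    (hf : HasDerivWithinAt f f' (Ici x) x) (hf' : 0 < f') : ∀ᶠ y in 𝓝[>] x, f x < f y := by
  have hslope : Tendsto (slope f x) (𝓝[>] x) (𝓝 f') := by
    simpa using hasDerivWithinAt_iff_tendsto_slope.mp hf
  filter_upwards [hslope.eventually_const_lt hf', self_mem_nhdsWithin] with y hy (hxy : x < y)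
  rw [slope_def_field] at hy
  exact sub_pos.mp ((div_pos_iff_of_pos_right (sub_pos.mpr hxy)).mp hy)

section QuasiPositive

variable {ι : Type*} [Finite ι] {X X' : ι → ℝ → ℝ} {T K : ℝ}
  (hcont : ∀ i, ContinuousOn (X i) (Icc 0 T))
  (hderiv : ∀ i, ∀ s ∈ Ico 0 T, HasDerivWithinAt (X i) (X' i s) (Ici s) s)
  (h0 : ∀ i, 0 ≤ X i 0)
  (hface : ∀ s ∈ Ico 0 T, ∀ P > 0, ∀ i, (∀ j, -P ≤ X j s) → X i s = -P → -(K * P) ≤ X' i s)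
include hcont hderiv h0 hface

theorem Icc_subset_add_exp_nonneg {ε : ℝ} (hε : 0 < ε) :
    Icc 0 T ⊆ {s | ∀ i, 0 ≤ X i s + ε * exp ((K + 1) * s)} := by
  refine IsClosed.Icc_subset_of_forall_mem_nhdsWithin ?closed (fun i => ?zero) ?step
  case closed =>
    rw [inter_comm]
    have : ContinuousOn (fun s i => X i s + ε * exp ((K + 1) * s)) (Icc 0 T) :=
      continuousOn_pi.2 fun i => (hcont i).add (by fun_prop)
    exact this.preimage_isClosed_of_isClosed isClosed_Icc
      (isClosed_le continuous_const continuous_id)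
  case zero => simpa using add_nonneg (h0 i) hε.le
  case step =>
    rintro x ⟨hx, hxT⟩
    refine eventually_all.2 fun i => ?_
    set P := ε * exp ((K + 1) * x)
    have hg : HasDerivWithinAt (fun s => X i s + ε * exp ((K + 1) * s))
        (X' i x + (K + 1) * P) (Ici x) x :=
      (hderiv i x hxT).add <| ((((hasDerivAt_id x).const_mul (K + 1)).exp.const_mul ε)
        |>.hasDerivWithinAt.congr_deriv (by simp only [P, id]; ring))
    rcases (hx i).lt_or_eq with hpos | hzero
    · exact (hg.continuousWithinAt.mono_left (nhdsWithin_mono x Ioi_subset_Ici_self)).eventually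
        (lt_mem_nhds hpos) |>.mono fun _ => le_of_lt
    · have hP : 0 < P := by positivity
      have hX'i := hface x hxT P hP i (fun j => by linarith [hx j]) (by linarith)
      filter_upwards [hg.eventually_lt_right_of_pos (by linarith)] with y hy
      linarith

theorem nonneg_of_deriv_ge_on_face : ∀ s ∈ Icc 0 T, ∀ i, 0 ≤ X i s := by
  intro s hs i
  refine le_of_forall_pos_le_add fun δ hδ => ?_
  have := Icc_subset_add_exp_nonneg hcont hderiv h0 hface
    (div_pos hδ (exp_pos ((K + 1) * s))) hs i
  rwa [div_mul_cancel₀ _ (exp_pos _).ne'] at this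

end QuasiPositive

theorem neg_mul_le_mul_of_mem_Icc {P M x y : ℝ} (hP : 0 ≤ P) (hM : 0 ≤ M)
    (hx : x ∈ Icc (-P) M) (hy : y ∈ Icc (-P) M) : -(P * M) ≤ x * y := by
  obtain ⟨hx₁, hx₂⟩ := hx
  obtain ⟨hy₁, hy₂⟩ := hy
  rcases le_total 0 x with h | h <;> rcases le_total 0 y with h' | h' <;> nlinarith

/-- The SEIR vector field at the state `x = (S, E, I, R)` and vaccination level `v`. -/
noncomputable def seirField (μ ω β σ γ N v : ℝ) (x : Fin 4 → ℝ) : Fin 4 → ℝ :=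
  ![-μ * x 0 + ω * x 3 - (β / N) * x 0 * x 2 + μ * N * (1 - v),
    (β / N) * x 0 * x 2 - (μ + σ) * x 1,
    -(μ + γ) * x 2 + σ * x 1,
    -(μ + ω) * x 3 + γ * x 2 + μ * N * v]

theorem seirField_ge_of_eq_neg {μ ω β σ γ N v M P : ℝ} {x : Fin 4 → ℝ}
    (hμ : 0 ≤ μ) (hω : 0 ≤ ω) (hβ : 0 ≤ β) (hσ : 0 ≤ σ) (hγ : 0 ≤ γ) (hN : 0 ≤ N)
    (hv : v ∈ Icc (0 : ℝ) 1) (hP : 0 ≤ P) (hx : ∀ j, -P ≤ x j)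
    (hS : |x 0| ≤ M) (hI : |x 2| ≤ M) (i : Fin 4) (hi : x i = -P) :
    -((ω + σ + γ + β / N * M) * P) ≤ seirField μ ω β σ γ N v x i := by
  have hc : 0 ≤ β / N := div_nonneg hβ hN
  have hM : 0 ≤ M := (abs_nonneg _).trans hS
  have hμN : 0 ≤ μ * N := mul_nonneg hμ hN
  obtain ⟨hv₀, hv₁⟩ := hv
  obtain ⟨-, hS_le⟩ := abs_le.mp hS
  obtain ⟨hI_ge, hI_le⟩ := abs_le.mp hI
  have hσP := mul_nonneg hσ hP
  have hγP := mul_nonneg hγ hP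
  have hωP := mul_nonneg hω hP
  have hμP := mul_nonneg hμ hP
  have hcMP := mul_nonneg (mul_nonneg hc hM) hP
  fin_cases i <;>
    simp only [seirField, Fin.zero_eta, Fin.mk_one, Fin.reduceFinMk, Fin.isValue,
      Matrix.cons_val_zero, Matrix.cons_val_one, Matrix.cons_val] at hi ⊢ <;>
    rw [hi]
  · linarith [mul_nonneg hω (neg_le_iff_add_nonneg.mp (hx 3)),
      mul_nonneg (mul_nonneg hc hP) (neg_le_iff_add_nonneg.mp hI_ge),
      mul_nonneg hμN (sub_nonneg.mpr hv₁)]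
  · linarith [mul_nonneg hc (neg_le_iff_add_nonneg'.mp
      (neg_mul_le_mul_of_mem_Icc hP hM ⟨hx 0, hS_le⟩ ⟨hx 2, hI_le⟩))]
  · linarith [mul_nonneg hσ (neg_le_iff_add_nonneg.mp (hx 1))]
  · linarith [mul_nonneg hγ (neg_le_iff_add_nonneg.mp (hx 2)), mul_nonneg hμN hv₀]

theorem seir_positivity_general
    (μ ω β σ γ N : ℝ) (S E I R V : ℝ → ℝ)
    (hμ : 0 ≤ μ) (hω : 0 ≤ ω) (hβ : 0 ≤ β) (hσ : 0 ≤ σ) (hγ : 0 ≤ γ)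
    (hNpos : 0 < N)
    (hV : ∀ t, 0 ≤ t → V t ∈ Set.Icc (0 : ℝ) 1)
    (hS : Differentiable ℝ S) (hE : Differentiable ℝ E)
    (hI : Differentiable ℝ I) (hR : Differentiable ℝ R)
    (hS' : ∀ t, 0 ≤ t → deriv S t = -μ * S t + ω * R t - (β / N) * S t * I t + μ * N * (1 - V t))
    (hE' : ∀ t, 0 ≤ t → deriv E t = (β / N) * S t * I t - (μ + σ) * E t)
    (hI' : ∀ t, 0 ≤ t → deriv I t = -(μ + γ) * I t + σ * E t)
    (hR' : ∀ t, 0 ≤ t → deriv R t = -(μ + ω) * R t + γ * I t + μ * N * V t)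
    (hS0 : 0 ≤ S 0) (hE0 : 0 ≤ E 0) (hI0 : 0 ≤ I 0) (hR0 : 0 ≤ R 0) :
    ∀ t, 0 ≤ t → 0 ≤ S t ∧ 0 ≤ E t ∧ 0 ≤ I t ∧ 0 ≤ R t := by
  intro t ht
  set X : Fin 4 → ℝ → ℝ := ![S, E, I, R]
  have hX : ∀ i, Differentiable ℝ (X i) := by
    intro i; fin_cases i <;> assumption
  have hX' : ∀ s, 0 ≤ s → ∀ i, deriv (X i) s = seirField μ ω β σ γ N (V s) (X · s) i := by
    intro s hs i
    fin_cases i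
    exacts [hS' s hs, hE' s hs, hI' s hs, hR' s hs]
  obtain ⟨M, hM⟩ := isCompact_Icc.exists_bound_of_continuousOn (s := Icc 0 t)
    (hS.continuous.prodMk hI.continuous).continuousOn
  have hpos := nonneg_of_deriv_ge_on_face (X' := fun i => deriv (X i))
    (K := ω + σ + γ + β / N * M) (fun i => (hX i).continuous.continuousOn)
    (fun i s _ => (hX i s).hasDerivAt.hasDerivWithinAt) (by intro i; fin_cases i <;> assumption)
    (fun s hs P hP i hXP hXi => by
      rw [hX' s hs.1]
      exact seirField_ge_of_eq_neg hμ hω hβ hσ hγ hNpos.le (hV s hs.1) hP.le hXP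
        ((norm_fst_le _).trans (hM s (Ico_subset_Icc_self hs)))
        ((norm_snd_le _).trans (hM s (Ico_subset_Icc_self hs))) i hXi)
    t ⟨ht, le_rfl⟩
  exact ⟨hpos 0, hpos 1, hpos 2, hpos 3⟩

/-- Positivity of the SEIR model under vaccination `V` valued in `[0,1]`. -/
theorem seir_positivity
    (μ ω β σ γ N : ℝ) (S E I R V : ℝ → ℝ)
    (hμ : 0 ≤ μ) (hω : 0 ≤ ω) (hβ : 0 ≤ β) (hσ : 0 ≤ σ) (hγ : 0 ≤ γ)
    (hN : N = S 0 + E 0 + I 0 + R 0) (hNpos : 0 < N)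
    (hVc : Continuous V) (hV : ∀ t, 0 ≤ t → V t ∈ Set.Icc (0 : ℝ) 1)
    (hS : Differentiable ℝ S) (hE : Differentiable ℝ E)
    (hI : Differentiable ℝ I) (hR : Differentiable ℝ R)
    (hS' : ∀ t, 0 ≤ t → deriv S t = -μ * S t + ω * R t - (β / N) * S t * I t + μ * N * (1 - V t))
    (hE' : ∀ t, 0 ≤ t → deriv E t = (β / N) * S t * I t - (μ + σ) * E t)
    (hI' : ∀ t, 0 ≤ t → deriv I t = -(μ + γ) * I t + σ * E t)
    (hR' : ∀ t, 0 ≤ t → deriv R t = -(μ + ω) * R t + γ * I t + μ * N * V t)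
    (hS0 : 0 ≤ S 0) (hE0 : 0 ≤ E 0) (hI0 : 0 ≤ I 0) (hR0 : 0 ≤ R 0) :
    ∀ t, 0 ≤ t → 0 ≤ S t ∧ 0 ≤ E t ∧ 0 ≤ I t ∧ 0 ≤ R t :=
  seir_positivity_general μ ω β σ γ N S E I R V hμ hω hβ hσ hγ hNpos hV hS hE hI hR hS' hE' hI' hR'
    hS0 hE0 hI0 hR0
end

section
/- Under the SEIR system with V(t) ∈ [0,1], nonnegative parameters, and nonnegative initial populations summing to N > 0, each of S(t), E(t), I(t), R(t) lies in [0, N] for all t ≥ 0. -/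
/-!
The total population `T = S + E + I + R` satisfies `T' = μ (N - T)` and `T 0 = N`, so `T ≡ N`
by Grönwall, and the upper bounds follow from nonnegativity. For nonnegativity, let
`G = Σ (min x 0)²` over the four compartments. Multiplying the equation of `x` by `min x 0`,
the loss term gives `-(rate) (min x 0)²` and every inflow from another compartment `y` is at most
a nonnegative multiple of `(min x 0)² + (min y 0)²`; the bilinear infection term is controlled by
a bound `M` of `|S|` and `|I|` on `[0, t]`. Hence `G' ≤ K G` on `[0, t]`, and `G 0 = 0` forces
`G ≡ 0` there by Grönwall.
-/

open Set Topology Asymptotics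

lemma min_zero_mul_self (x : ℝ) : min x 0 * x = min x 0 ^ 2 := by
  rcases le_total x 0 with h | h <;> simp [h, sq]

lemma min_zero_mul_le (x y : ℝ) : min x 0 * y ≤ min x 0 * min y 0 :=
  mul_le_mul_of_nonpos_left (min_le_left y 0) (min_le_right x 0)

lemma two_mul_min_zero_mul_le (x y : ℝ) : 2 * (min x 0 * y) ≤ min x 0 ^ 2 + min y 0 ^ 2 := by
  linarith [min_zero_mul_le x y, two_mul_le_add_sq (min x 0) (min y 0)]

lemma two_mul_min_zero_mul_linear_le {x y a b q : ℝ} (hb : 0 ≤ b) (hq : 0 ≤ q) :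
    2 * min x 0 * (-a * x + b * y + q) ≤ (b - 2 * a) * min x 0 ^ 2 + b * min y 0 ^ 2 := by
  have hxq : min x 0 * q ≤ 0 := mul_nonpos_of_nonpos_of_nonneg (min_le_right x 0) hq
  linear_combination (-2 * a) * min_zero_mul_self x + b * two_mul_min_zero_mul_le x y + 2 * hxq

lemma min_zero_mul_mul_le {x y z M : ℝ} (hM : 0 ≤ M) (hy : y ≤ M) (hz : z ≤ M) :
    min x 0 * (y * z) ≤ M * (min x 0 * min y 0 + min x 0 * min z 0) := by
  have ha : min x 0 ≤ 0 := min_le_right x 0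
  rcases le_total y 0 with hy' | hy' <;> rcases le_total z 0 with hz' | hz' <;>
    simp only [hy', hz', min_eq_left, min_eq_right, mul_zero, add_zero, zero_add]
  · nlinarith [mul_nonneg_of_nonpos_of_nonpos ha hy', mul_nonneg_of_nonpos_of_nonpos ha hz',
      mul_nonneg_of_nonpos_of_nonpos hy' hz']
  · nlinarith [mul_nonneg_of_nonpos_of_nonpos ha hy']
  · nlinarith [mul_nonneg_of_nonpos_of_nonpos ha hz']
  · nlinarith [mul_nonneg hy' hz']

lemma two_mul_min_zero_mul_mul_le {x y z M : ℝ} (hM : 0 ≤ M) (hy : y ≤ M) (hz : z ≤ M) :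
    2 * (min x 0 * (y * z)) ≤ M * (2 * min x 0 ^ 2 + min y 0 ^ 2 + min z 0 ^ 2) := by
  linear_combination 2 * min_zero_mul_mul_le (x := x) hM hy hz +
    M * two_mul_le_add_sq (min x 0) (min y 0) + M * two_mul_le_add_sq (min x 0) (min z 0)

lemma hasDerivAt_min_zero_sq (x : ℝ) : HasDerivAt (fun y => min y 0 ^ 2) (2 * min x 0) x := by
  rcases lt_trichotomy x 0 with hx | rfl | hx
  · rw [min_eq_left hx.le]
    refine ((hasDerivAt_pow 2 x).congr_of_eventuallyEq ?_).congr_deriv (by ring)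
    filter_upwards [eventually_lt_nhds hx] with y hy
    rw [min_eq_left hy.le]
  · rw [min_self, mul_zero]
    refine .of_isLittleO ?_
    have hO : (fun y : ℝ => min y 0 ^ 2) =O[𝓝 0] fun y => y ^ 2 := by
      refine .of_bound 1 (.of_forall fun y => ?_)
      rcases le_total y 0 with hy | hy <;> simp [hy]
    simpa using hO.trans_isLittleO (isLittleO_pow_id one_lt_two)
  · rw [min_eq_right hx.le, mul_zero]
    refine (hasDerivAt_const x 0).congr_of_eventuallyEq ?_
    filter_upwards [eventually_gt_nhds hx] with y hy
    simp [min_eq_right hy.le]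

theorem HasDerivAt.min_zero_sq {f : ℝ → ℝ} {f' x : ℝ} (hf : HasDerivAt f f' x) :
    HasDerivAt (fun y => min (f y) 0 ^ 2) (2 * min (f x) 0 * f') x :=
  (hasDerivAt_min_zero_sq (f x)).comp x hf

lemma nonpos_of_deriv_le_mul_self {f f' : ℝ → ℝ} {K a b : ℝ}
    (hf : ContinuousOn f (Icc a b)) (hf' : ∀ x ∈ Ico a b, HasDerivWithinAt f (f' x) (Ici x) x)
    (ha : f a ≤ 0) (bound : ∀ x ∈ Ico a b, f' x ≤ K * f x) :
    ∀ x ∈ Icc a b, f x ≤ 0 := fun x hx => by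
  simpa [gronwallBound_ε0_δ0] using le_gronwallBound_of_liminf_deriv_right_le (ε := 0) hf
    (fun x hx _ hr => (hf' x hx).liminf_right_slope_le hr) ha (by simpa using bound) x hx

lemma seir_negPart_sq_deriv_le {μ ω β σ γ N M S E I R V : ℝ}
    (hμ : 0 ≤ μ) (hω : 0 ≤ ω) (hβ : 0 ≤ β) (hσ : 0 ≤ σ) (hγ : 0 ≤ γ) (hN : 0 ≤ N)
    (hV : V ∈ Icc (0 : ℝ) 1) (hSM : |S| ≤ M) (hIM : |I| ≤ M) :
    2 * min S 0 * (-μ * S + ω * R - (β / N) * S * I + μ * N * (1 - V))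
      + 2 * min E 0 * ((β / N) * S * I - (μ + σ) * E)
      + 2 * min I 0 * (-(μ + γ) * I + σ * E)
      + 2 * min R 0 * (-(μ + ω) * R + γ * I + μ * N * V)
    ≤ (ω + σ + γ + 4 * (β / N) * M) *
        (min S 0 ^ 2 + min E 0 ^ 2 + min I 0 ^ 2 + min R 0 ^ 2) := by
  set c := β / N
  have hc : 0 ≤ c := div_nonneg hβ hN
  have hM : 0 ≤ M := (abs_nonneg S).trans hSM
  rw [abs_le] at hSM hIM
  -- The `S`-equation is linear in `S` with rate `μ + c I ≥ μ - c M`.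
  have bS := two_mul_min_zero_mul_linear_le (x := S) (y := R) (a := μ + c * I) hω
    (mul_nonneg (mul_nonneg hμ hN) (sub_nonneg.2 hV.2))
  have bE := two_mul_min_zero_mul_mul_le (x := E) hM hSM.2 hIM.2
  have bI := two_mul_min_zero_mul_linear_le (x := I) (y := E) (a := μ + γ) (q := 0) hσ le_rfl
  have bR := two_mul_min_zero_mul_linear_le (x := R) (y := I) (a := μ + ω) hγ
    (mul_nonneg (mul_nonneg hμ hN) hV.1)
  have hcI : 0 ≤ c * (M + I) := mul_nonneg hc (by linarith)
  linear_combination bS + c * bE - 2 * (μ + σ) * min_zero_mul_self E + bI + bR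
    + 2 * min S 0 ^ 2 * hcI
    + (σ + γ + c * M + 2 * μ) * sq_nonneg (min S 0)
    + (ω + 2 * σ + γ + 2 * c * M + 2 * μ) * sq_nonneg (min E 0)
    + (ω + 2 * γ + 3 * c * M + 2 * μ) * sq_nonneg (min I 0)
    + (2 * ω + σ + 4 * c * M + 2 * μ) * sq_nonneg (min R 0)

structure IsSEIRSolution (μ ω β σ γ N : ℝ) (S E I R V : ℝ → ℝ) : Prop where
  differentiable_S : Differentiable ℝ S
  differentiable_E : Differentiable ℝ E
  differentiable_I : Differentiable ℝ I
  differentiable_R : Differentiable ℝ R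
  deriv_S : ∀ t, 0 ≤ t → deriv S t = -μ * S t + ω * R t - (β / N) * S t * I t + μ * N * (1 - V t)
  deriv_E : ∀ t, 0 ≤ t → deriv E t = (β / N) * S t * I t - (μ + σ) * E t
  deriv_I : ∀ t, 0 ≤ t → deriv I t = -(μ + γ) * I t + σ * E t
  deriv_R : ∀ t, 0 ≤ t → deriv R t = -(μ + ω) * R t + γ * I t + μ * N * V t

namespace IsSEIRSolution

variable {μ ω β σ γ N : ℝ} {S E I R V : ℝ → ℝ}

theorem total_eq (h : IsSEIRSolution μ ω β σ γ N S E I R V) (hN : N = S 0 + E 0 + I 0 + R 0)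
    {t : ℝ} (ht : 0 ≤ t) : S t + E t + I t + R t = N := by
  let D : ℝ → ℝ := fun u => S u + E u + I u + R u - N
  have hD : ∀ u, 0 ≤ u → HasDerivAt D (-μ * D u) u := fun u hu => by
    refine (((((h.differentiable_S u).hasDerivAt.add (h.differentiable_E u).hasDerivAt).add
      (h.differentiable_I u).hasDerivAt).add (h.differentiable_R u).hasDerivAt).sub_const
      N).congr_deriv ?_
    rw [h.deriv_S u hu, h.deriv_E u hu, h.deriv_I u hu, h.deriv_R u hu]
    ring
  have hD_cont : Continuous D := by
    have := h.differentiable_S.continuous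
    have := h.differentiable_E.continuous
    have := h.differentiable_I.continuous
    have := h.differentiable_R.continuous
    fun_prop
  have hD_zero := eq_zero_of_abs_deriv_le_mul_abs_self_of_eq_zero_right (f := D) (K := |μ|)
    hD_cont.continuousOn (fun u hu => (hD u hu.1).hasDerivWithinAt) (by simp [D, hN])
    (fun u _ => by rw [norm_mul, norm_neg, Real.norm_eq_abs]) t ⟨ht, le_rfl⟩
  simpa [D, sub_eq_zero] using hD_zero

theorem nonneg (h : IsSEIRSolution μ ω β σ γ N S E I R V)
    (hμ : 0 ≤ μ) (hω : 0 ≤ ω) (hβ : 0 ≤ β) (hσ : 0 ≤ σ) (hγ : 0 ≤ γ) (hN : 0 ≤ N)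
    (hV : ∀ t, 0 ≤ t → V t ∈ Icc (0 : ℝ) 1)
    (hS0 : 0 ≤ S 0) (hE0 : 0 ≤ E 0) (hI0 : 0 ≤ I 0) (hR0 : 0 ≤ R 0) {t : ℝ} (ht : 0 ≤ t) :
    0 ≤ S t ∧ 0 ≤ E t ∧ 0 ≤ I t ∧ 0 ≤ R t := by
  obtain ⟨M, hM⟩ := (isCompact_Icc (a := 0) (b := t)).exists_bound_of_continuousOn
    (h.differentiable_S.continuous.prodMk h.differentiable_I.continuous).continuousOn
  let G : ℝ → ℝ := fun u => min (S u) 0 ^ 2 + min (E u) 0 ^ 2 + min (I u) 0 ^ 2 + min (R u) 0 ^ 2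
  have hG : ∀ u, HasDerivAt G (2 * min (S u) 0 * deriv S u + 2 * min (E u) 0 * deriv E u
      + 2 * min (I u) 0 * deriv I u + 2 * min (R u) 0 * deriv R u) u := fun u =>
    ((((h.differentiable_S u).hasDerivAt.min_zero_sq.add
      (h.differentiable_E u).hasDerivAt.min_zero_sq).add
      (h.differentiable_I u).hasDerivAt.min_zero_sq).add
      (h.differentiable_R u).hasDerivAt.min_zero_sq)
  have hG_nonpos : G t ≤ 0 := nonpos_of_deriv_le_mul_self (K := ω + σ + γ + 4 * (β / N) * M)
    (continuous_iff_continuousAt.2 fun u => (hG u).continuousAt).continuousOn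
    (fun u _ => (hG u).hasDerivWithinAt) (by simp [G, hS0, hE0, hI0, hR0])
    (fun u hu => by
      have hu' : u ∈ Icc 0 t := Ico_subset_Icc_self hu
      rw [h.deriv_S u hu.1, h.deriv_E u hu.1, h.deriv_I u hu.1, h.deriv_R u hu.1]
      exact seir_negPart_sq_deriv_le hμ hω hβ hσ hγ hN (hV u hu.1)
        ((norm_fst_le _).trans (hM u hu')) ((norm_snd_le _).trans (hM u hu')))
    t ⟨ht, le_rfl⟩
  have hsq (x : ℝ) : 0 ≤ min x 0 ^ 2 := sq_nonneg _
  have hzero {x : ℝ} (hx : min x 0 ^ 2 ≤ 0) : 0 ≤ x := by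
    simpa using le_antisymm hx (hsq x)
  refine ⟨hzero ?_, hzero ?_, hzero ?_, hzero ?_⟩ <;>
    linarith [hsq (S t), hsq (E t), hsq (I t), hsq (R t)]

end IsSEIRSolution

theorem seir_populations_in_Icc_general
    (μ ω β σ γ N : ℝ) (S E I R V : ℝ → ℝ)
    (hμ : 0 ≤ μ) (hω : 0 ≤ ω) (hβ : 0 ≤ β) (hσ : 0 ≤ σ) (hγ : 0 ≤ γ)
    (hN : N = S 0 + E 0 + I 0 + R 0)
    (hV : ∀ t, 0 ≤ t → V t ∈ Set.Icc (0 : ℝ) 1)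
    (hS : Differentiable ℝ S) (hE : Differentiable ℝ E)
    (hI : Differentiable ℝ I) (hR : Differentiable ℝ R)
    (hS' : ∀ t, 0 ≤ t → deriv S t = -μ * S t + ω * R t - (β / N) * S t * I t + μ * N * (1 - V t))
    (hE' : ∀ t, 0 ≤ t → deriv E t = (β / N) * S t * I t - (μ + σ) * E t)
    (hI' : ∀ t, 0 ≤ t → deriv I t = -(μ + γ) * I t + σ * E t)
    (hR' : ∀ t, 0 ≤ t → deriv R t = -(μ + ω) * R t + γ * I t + μ * N * V t)
    (hS0 : 0 ≤ S 0) (hE0 : 0 ≤ E 0) (hI0 : 0 ≤ I 0) (hR0 : 0 ≤ R 0) :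
    ∀ t, 0 ≤ t →
      S t ∈ Set.Icc (0 : ℝ) N ∧ E t ∈ Set.Icc (0 : ℝ) N ∧
      I t ∈ Set.Icc (0 : ℝ) N ∧ R t ∈ Set.Icc (0 : ℝ) N := by
  intro t ht
  have hsol : IsSEIRSolution μ ω β σ γ N S E I R V := ⟨hS, hE, hI, hR, hS', hE', hI', hR'⟩
  obtain ⟨hSt, hEt, hIt, hRt⟩ :=
    hsol.nonneg hμ hω hβ hσ hγ (by linarith) hV hS0 hE0 hI0 hR0 ht
  have htotal := hsol.total_eq hN ht
  exact ⟨⟨hSt, by linarith⟩, ⟨hEt, by linarith⟩, ⟨hIt, by linarith⟩, ⟨hRt, by linarith⟩⟩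

/-- Under the SEIR system with `V t ∈ [0,1]`, each partial population lies in `[0,N]`. -/
theorem seir_populations_in_Icc
    (μ ω β σ γ N : ℝ) (S E I R V : ℝ → ℝ)
    (hμ : 0 ≤ μ) (hω : 0 ≤ ω) (hβ : 0 ≤ β) (hσ : 0 ≤ σ) (hγ : 0 ≤ γ)
    (hN : N = S 0 + E 0 + I 0 + R 0) (hNpos : 0 < N)
    (hVc : Continuous V) (hV : ∀ t, 0 ≤ t → V t ∈ Set.Icc (0 : ℝ) 1)
    (hS : Differentiable ℝ S) (hE : Differentiable ℝ E)
    (hI : Differentiable ℝ I) (hR : Differentiable ℝ R)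
    (hS' : ∀ t, 0 ≤ t → deriv S t = -μ * S t + ω * R t - (β / N) * S t * I t + μ * N * (1 - V t))
    (hE' : ∀ t, 0 ≤ t → deriv E t = (β / N) * S t * I t - (μ + σ) * E t)
    (hI' : ∀ t, 0 ≤ t → deriv I t = -(μ + γ) * I t + σ * E t)
    (hR' : ∀ t, 0 ≤ t → deriv R t = -(μ + ω) * R t + γ * I t + μ * N * V t)
    (hS0 : 0 ≤ S 0) (hE0 : 0 ≤ E 0) (hI0 : 0 ≤ I 0) (hR0 : 0 ≤ R 0) :
    ∀ t, 0 ≤ t →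
      S t ∈ Set.Icc (0 : ℝ) N ∧ E t ∈ Set.Icc (0 : ℝ) N ∧
      I t ∈ Set.Icc (0 : ℝ) N ∧ R t ∈ Set.Icc (0 : ℝ) N :=
  seir_populations_in_Icc_general μ ω β σ γ N S E I R V hμ hω hβ hσ hγ hN hV hS hE hI hR hS' hE' hI'
    hR' hS0 hE0 hI0 hR0
end

section
/- If the vaccination is chosen as V(t) = (1/(μN))(ωR(t) + (g - βI(t)/N)S(t) + μN) with g ≥ 0 and μ > 0, then the susceptible population satisfies S'(t) = -(μ+g)S(t), hence S(t) = e^{-(μ+g)t} S(0) and S(t) → 0 as t → ∞. -/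
open Filter Topology

/- The vaccination law is chosen exactly to cancel the inflow `ω R + μ N` and the infection
term `β S I / N` in the equation for `S`, leaving the linear equation `S' = -(μ + g) S`;
its solutions are `S 0 · e^{-(μ+g) t}`, which tend to `0` because `μ + g > 0`. -/

theorem eq_exp_mul_mul_of_deriv_eq_mul {f : ℝ → ℝ} {c : ℝ} (hf : Differentiable ℝ f)
    (hderiv : ∀ t, deriv f t = c * f t) (t : ℝ) : f t = Real.exp (c * t) * f 0 := by
  have hconst : Real.exp (-c * t) * f t = f 0 := by
    refine (is_const_of_deriv_eq_zero (f := fun s ↦ Real.exp (-c * s) * f s)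
      (by fun_prop) (fun x ↦ ?_) t 0).trans (by simp)
    have hexp : HasDerivAt (fun s ↦ Real.exp (-c * s)) (Real.exp (-c * x) * -c) x :=
      ((hasDerivAt_id x).const_mul (-c)).exp.congr_deriv (by simp)
    exact (hexp.mul (hf x).hasDerivAt).deriv.trans (by rw [hderiv x]; ring)
  calc f t = Real.exp (c * t) * (Real.exp (-c * t) * f t) := by
        rw [← mul_assoc, ← Real.exp_add]; simp
    _ = Real.exp (c * t) * f 0 := by rw [hconst]

theorem tendsto_exp_mul_mul_atTop_nhds_zero {c : ℝ} (hc : c < 0) (a : ℝ) :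
    Tendsto (fun t ↦ Real.exp (c * t) * a) atTop (𝓝 0) := by
  simpa using (Real.tendsto_exp_atBot.comp (tendsto_id.const_mul_atTop_of_neg hc)).mul_const a

theorem seir_susceptible_exponential_decay_general
    (μ ω β N g : ℝ) (S I R V : ℝ → ℝ)
    (hμ : 0 < μ)
    (hN : 0 < N) (hg : 0 ≤ g)
    (hS : Differentiable ℝ S)
    (hS' : ∀ t, deriv S t = -μ * S t + ω * R t - (β / N) * S t * I t + μ * N * (1 - V t))
    (hV : ∀ t, V t = (1 / (μ * N)) * (ω * R t + (g - β * I t / N) * S t + μ * N)) :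
    (∀ t, deriv S t = -(μ + g) * S t) ∧
    (∀ t, 0 ≤ t → S t = Real.exp (-(μ + g) * t) * S 0) ∧
    Filter.Tendsto S Filter.atTop (nhds 0) := by
  have hμN : μ * N ≠ 0 := by positivity
  have hlinear : ∀ t, deriv S t = -(μ + g) * S t := by
    intro t
    rw [hS' t, hV t]
    field_simp
    ring
  have hsol := eq_exp_mul_mul_of_deriv_eq_mul hS hlinear
  refine ⟨hlinear, fun t _ ↦ hsol t, ?_⟩
  have hdecay : -(μ + g) < 0 := by linarith
  simpa only [← hsol] using tendsto_exp_mul_mul_atTop_nhds_zero hdecay (S 0)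

/-- Under the feedback-linearizing vaccination law (26), the susceptible population
decays exponentially: `S' = -(μ+g) S`, `S t = exp (-(μ+g) t) * S 0` and `S → 0`. -/
theorem seir_susceptible_exponential_decay
    (μ ω β σ γ N g : ℝ) (S E I R V : ℝ → ℝ)
    (hμ : 0 < μ) (hω : 0 ≤ ω) (hβ : 0 ≤ β) (hσ : 0 ≤ σ) (hγ : 0 ≤ γ)
    (hN : 0 < N) (hg : 0 ≤ g)
    (hS : Differentiable ℝ S)
    (hS' : ∀ t, deriv S t = -μ * S t + ω * R t - (β / N) * S t * I t + μ * N * (1 - V t))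
    (hV : ∀ t, V t = (1 / (μ * N)) * (ω * R t + (g - β * I t / N) * S t + μ * N)) :
    (∀ t, deriv S t = -(μ + g) * S t) ∧
    (∀ t, 0 ≤ t → S t = Real.exp (-(μ + g) * t) * S 0) ∧
    Filter.Tendsto S Filter.atTop (nhds 0) :=
  seir_susceptible_exponential_decay_general μ ω β N g S I R V hμ hN hg hS hS' hV
end

section
/- If I satisfies I'(t) = -(μ+γ)I(t) + σE(t) with E(t) ≤ e^{-(μ+σ)t}E(0) + βN(e^{-(μ+g)t} - e^{-(μ+σ)t})/(σ-g), I(t) ≥ 0, E(t) ≥ 0, and the parameters satisfy μ, σ, γ, β > 0, g ≥ 0, γ ≠ σ, g ≠ σ, g ≠ γ, then I(t) → 0 as t → ∞ (exponentially). -/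
/-!
Both exponentials in the bound for `E` decay at least at the rate `r = min (μ + σ) (μ + g) > 0`,
so `E t ≤ C exp (-r t)`. For `0 < b < r` with `b ≤ μ + γ`, the integrating factor `exp (b t)`
turns `I' ≤ -(μ + γ) I + σ C exp (-r t)` (with `I ≥ 0`) into the statement that
`exp (b t) I t + σ C / (r - b) · exp ((b - r) t)` is nonincreasing, hence `I t = O(exp (-b t))`.
-/

open Real Set Filter Topology

lemma abs_exp_sub_exp_le_exp_min {p q t : ℝ} (ht : 0 ≤ t) :
    |exp (-p * t) - exp (-q * t)| ≤ exp (-min p q * t) := by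
  have hp : exp (-p * t) ≤ exp (-min p q * t) :=
    exp_le_exp_of_le (by nlinarith [min_le_left p q])
  have hq : exp (-q * t) ≤ exp (-min p q * t) :=
    exp_le_exp_of_le (by nlinarith [min_le_right p q])
  rw [abs_le]
  constructor <;> linarith [exp_pos (-p * t), exp_pos (-q * t)]

lemma le_mul_exp_min_of_le_exp_add_mul_exp_sub_exp {E : ℝ → ℝ} {p q K t : ℝ} (hE0 : 0 ≤ E 0)
    (hE : E t ≤ exp (-p * t) * E 0 + K * (exp (-q * t) - exp (-p * t))) (ht : 0 ≤ t) :
    E t ≤ (E 0 + |K|) * exp (-min p q * t) := by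
  have hp : exp (-p * t) ≤ exp (-min p q * t) :=
    exp_le_exp_of_le (by nlinarith [min_le_left p q])
  have hdiff : K * (exp (-q * t) - exp (-p * t)) ≤ |K| * exp (-min p q * t) :=
    calc K * (exp (-q * t) - exp (-p * t))
        ≤ |K| * |exp (-q * t) - exp (-p * t)| := (le_abs_self _).trans_eq (abs_mul _ _)
      _ ≤ |K| * exp (-min p q * t) := by
        rw [min_comm]
        exact mul_le_mul_of_nonneg_left (abs_exp_sub_exp_le_exp_min ht) (abs_nonneg K)
  calc E t ≤ exp (-p * t) * E 0 + K * (exp (-q * t) - exp (-p * t)) := hE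
    _ ≤ exp (-min p q * t) * E 0 + |K| * exp (-min p q * t) := by
      gcongr
    _ = (E 0 + |K|) * exp (-min p q * t) := by ring

lemma antitoneOn_exp_mul_add_of_deriv_add_mul_le {I I' : ℝ → ℝ} {a b c : ℝ} (hab : b ≠ a)
    (hI : ∀ t, 0 ≤ t → HasDerivAt I (I' t) t)
    (hI' : ∀ t, 0 ≤ t → I' t + b * I t ≤ c * exp (-a * t)) :
    AntitoneOn (fun t ↦ exp (b * t) * I t + c / (a - b) * exp ((b - a) * t)) (Ici 0) := by
  have hderiv : ∀ t, 0 ≤ t → HasDerivAt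
      (fun t ↦ exp (b * t) * I t + c / (a - b) * exp ((b - a) * t))
      (exp (b * t) * (I' t + b * I t) - c * exp ((b - a) * t)) t := by
    intro t ht
    have hexp : ∀ s, HasDerivAt (fun t ↦ exp (s * t)) (exp (s * t) * s) t := fun s ↦ by
      simpa using ((hasDerivAt_id t).const_mul s).exp
    refine (((hexp b).mul (hI t ht)).add ((hexp (b - a)).const_mul (c / (a - b)))).congr_deriv ?_
    field_simp [sub_ne_zero.mpr hab.symm]
    ring
  refine antitoneOn_of_hasDerivWithinAt_nonpos (convex_Ici 0)
    (fun t ht ↦ (hderiv t ht).continuousAt.continuousWithinAt)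
    (fun t ht ↦ (hderiv t (interior_subset ht)).hasDerivWithinAt) fun t ht ↦ ?_
  have ht : 0 ≤ t := interior_subset ht
  have hfactor : exp (b * t) * exp (-a * t) = exp ((b - a) * t) := by
    rw [← exp_add]; ring_nf
  have := mul_le_mul_of_nonneg_left (hI' t ht) (exp_pos (b * t)).le
  rw [mul_left_comm, hfactor] at this
  linarith

lemma le_mul_exp_of_nonneg_of_deriv_le {I I' : ℝ → ℝ} {k a b c : ℝ} (hbk : b ≤ k) (hba : b < a)
    (hc : 0 ≤ c) (hI0 : ∀ t, 0 ≤ t → 0 ≤ I t) (hI : ∀ t, 0 ≤ t → HasDerivAt I (I' t) t)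
    (hI' : ∀ t, 0 ≤ t → I' t ≤ -k * I t + c * exp (-a * t)) {t : ℝ} (ht : 0 ≤ t) :
    I t ≤ (I 0 + c / (a - b)) * exp (-b * t) := by
  have hanti := antitoneOn_exp_mul_add_of_deriv_add_mul_le (c := c) hba.ne hI fun s hs ↦ by
    nlinarith [hI' s hs, hI0 s hs]
  have hmono := hanti self_mem_Ici ht ht
  simp only [mul_zero, exp_zero, one_mul, mul_one] at hmono
  have htail : 0 ≤ c / (a - b) * exp ((b - a) * t) :=
    mul_nonneg (div_nonneg hc (sub_nonneg.mpr hba.le)) (exp_pos _).le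
  have hscaled : exp (b * t) * I t ≤ I 0 + c / (a - b) := by linarith
  calc I t = exp (-b * t) * (exp (b * t) * I t) := by
        rw [← mul_assoc, ← exp_add, show -b * t + b * t = 0 by ring, exp_zero, one_mul]
    _ ≤ exp (-b * t) * (I 0 + c / (a - b)) :=
        mul_le_mul_of_nonneg_left hscaled (exp_pos _).le
    _ = (I 0 + c / (a - b)) * exp (-b * t) := mul_comm _ _

lemma tendsto_zero_of_nonneg_of_le_mul_exp {I : ℝ → ℝ} {M b : ℝ} (hb : 0 < b)
    (hI0 : ∀ t, 0 ≤ t → 0 ≤ I t) (hI : ∀ t, 0 ≤ t → I t ≤ M * exp (-b * t)) :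
    Tendsto I atTop (𝓝 0) := by
  have hexp : Tendsto (fun t ↦ exp (-b * t)) atTop (𝓝 0) :=
    tendsto_exp_comp_nhds_zero.mpr (tendsto_id.const_mul_atTop_of_neg (neg_lt_zero.mpr hb))
  simpa using squeeze_zero' (eventually_atTop.mpr ⟨0, hI0⟩) (eventually_atTop.mpr ⟨0, hI⟩)
    (by simpa using hexp.const_mul M)

theorem seir_infectious_to_zero_general
    (μ σ γ β N g : ℝ) (E I : ℝ → ℝ)
    (hμ : 0 < μ) (hσ : 0 < σ) (hγ : 0 < γ) (hg : 0 ≤ g)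
    (hE0 : 0 ≤ E 0)
    (hInn : ∀ t, 0 ≤ t → 0 ≤ I t)
    (hEb : ∀ t, 0 ≤ t →
      E t ≤ Real.exp (-(μ + σ) * t) * E 0 +
        β * N * (Real.exp (-(μ + g) * t) - Real.exp (-(μ + σ) * t)) / (σ - g))
    (hI' : ∀ t, 0 ≤ t → HasDerivAt I (-(μ + γ) * I t + σ * E t) t) :
    Filter.Tendsto I Filter.atTop (nhds 0) := by
  set r := min (μ + σ) (μ + g)
  have hr : 0 < r := lt_min (by linarith) (by linarith)
  set C := E 0 + |β * N / (σ - g)|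
  have hC : 0 ≤ C := add_nonneg hE0 (abs_nonneg _)
  have hE : ∀ t, 0 ≤ t → E t ≤ C * exp (-r * t) := fun t ht ↦
    le_mul_exp_min_of_le_exp_add_mul_exp_sub_exp hE0 ((hEb t ht).trans_eq (by ring)) ht
  set b := min (r / 2) (μ + γ)
  have hb : 0 < b := lt_min (by linarith) (by linarith)
  have hI : ∀ t, 0 ≤ t → I t ≤ (I 0 + σ * C / (r - b)) * exp (-b * t) := fun t ht ↦
    le_mul_exp_of_nonneg_of_deriv_le (min_le_right _ _)
      (by linarith [min_le_left (r / 2) (μ + γ)]) (mul_nonneg hσ.le hC) hInn hI'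
      (fun s hs ↦ by nlinarith [mul_le_mul_of_nonneg_left (hE s hs) hσ.le]) ht
  exact tendsto_zero_of_nonneg_of_le_mul_exp hb hInn hI

/-- The infectious population converges to zero under the exponentially
decaying bound on the infected population. -/
theorem seir_infectious_to_zero
    (μ σ γ β N g : ℝ) (E I : ℝ → ℝ)
    (hμ : 0 < μ) (hσ : 0 < σ) (hγ : 0 < γ) (hβ : 0 < β) (hN : 0 < N) (hg : 0 ≤ g)
    (hγσ : γ ≠ σ) (hgσ : g ≠ σ) (hgγ : g ≠ γ)
    (hE0 : 0 ≤ E 0) (hI0 : 0 ≤ I 0)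
    (hInn : ∀ t, 0 ≤ t → 0 ≤ I t) (hEnn : ∀ t, 0 ≤ t → 0 ≤ E t)
    (hEb : ∀ t, 0 ≤ t →
      E t ≤ Real.exp (-(μ + σ) * t) * E 0 +
        β * N * (Real.exp (-(μ + g) * t) - Real.exp (-(μ + σ) * t)) / (σ - g))
    (hI' : ∀ t, 0 ≤ t → HasDerivAt I (-(μ + γ) * I t + σ * E t) t) :
    Filter.Tendsto I Filter.atTop (nhds 0) :=
  seir_infectious_to_zero_general μ σ γ β N g E I hμ hσ hγ hg hE0 hInn hEb hI'
end

section
/- Assume σ = γ > 0, μ > 0, β > 0, ω ≥ 0 and (μ+σ)² < σβ. Then the point (S*, E*, I*, R*) with S* = ((μ+σ)²/(σβ))N, R* = σ(σβ-(μ+σ)²)N/(β((μ+σ)²+ω(μ+2σ))), I* = ((μ+ω)/σ)R*, E* = (1+μ/σ)I* is an equilibrium of the vaccination-free SEIR system, i.e., all four right-hand sides vanish there, and each component is positive. -/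
/-!
Writing `R₀ = σβ/(μ+σ)²`, the susceptible fraction at equilibrium is `S*/N = 1/R₀`, so the
per-capita force of infection `βS*/N` equals `(μ+σ)²/σ`. With this rate the exposed, infected and
recovered equations are linear and are solved by the stated chain `E* ∝ I* ∝ R*`; the susceptible
equation then fixes `R*`, thanks to the identity
`(μ+σ)²(μ+ω) - ωσ² = μ((μ+σ)² + ω(μ+2σ))`. Positivity of every component is the condition `R₀ > 1`.
-/

section Equilibrium

variable {K : Type*} [Field K] {μ σ ω β N : K}

theorem seir_forceOfInfection_eq (hσ : σ ≠ 0) (hβ : β ≠ 0) (hN : N ≠ 0) :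
    β / N * ((μ + σ) ^ 2 / (σ * β) * N) = (μ + σ) ^ 2 / σ := by
  field_simp

theorem seir_susceptible_balance (hσ : σ ≠ 0) (hβ : β ≠ 0)
    (hD : (μ + σ) ^ 2 + ω * (μ + 2 * σ) ≠ 0) (R : K)
    (hR : R = σ * (σ * β - (μ + σ) ^ 2) * N / (β * ((μ + σ) ^ 2 + ω * (μ + 2 * σ)))) :
    μ * ((μ + σ) ^ 2 / (σ * β) * N) - ω * R + (μ + σ) ^ 2 / σ * ((μ + ω) / σ * R) = μ * N := by
  have key : (μ + σ) ^ 2 * (μ + ω) - ω * σ ^ 2 = μ * ((μ + σ) ^ 2 + ω * (μ + 2 * σ)) := by ring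
  generalize (μ + σ) ^ 2 + ω * (μ + 2 * σ) = D at hD hR key
  calc μ * ((μ + σ) ^ 2 / (σ * β) * N) - ω * R + (μ + σ) ^ 2 / σ * ((μ + ω) / σ * R)
      = μ * ((μ + σ) ^ 2 / (σ * β) * N) + ((μ + σ) ^ 2 * (μ + ω) - ω * σ ^ 2) / σ ^ 2 * R := by
        field_simp; ring
    _ = μ * ((μ + σ) ^ 2 / (σ * β) * N) + μ * D / σ ^ 2 * R := by rw [key]
    _ = μ * N := by rw [hR]; field_simp; ring

end Equilibrium

/-- The endemic equilibrium of the vaccination-free SEIR system with `σ = γ`. -/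
theorem seir_endemic_equilibrium
    (μ σ ω β N Sstar Estar Istar Rstar : ℝ)
    (hμ : 0 < μ) (hσ : 0 < σ) (hβ : 0 < β) (hω : 0 ≤ ω) (hN : 0 < N)
    (hcond : (μ + σ) ^ 2 < σ * β)
    (hSstar : Sstar = ((μ + σ) ^ 2 / (σ * β)) * N)
    (hRstar : Rstar = σ * (σ * β - (μ + σ) ^ 2) * N / (β * ((μ + σ) ^ 2 + ω * (μ + 2 * σ))))
    (hIstar : Istar = ((μ + ω) / σ) * Rstar)
    (hEstar : Estar = (1 + μ / σ) * Istar) :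
    μ * Sstar - ω * Rstar + (β / N) * Sstar * Istar = μ * N ∧
    (β / N) * Sstar * Istar = (μ + σ) * Estar ∧
    (μ + σ) * Istar = σ * Estar ∧
    (μ + ω) * Rstar = σ * Istar ∧
    0 < Sstar ∧ 0 < Estar ∧ 0 < Istar ∧ 0 < Rstar := by
  have hD : 0 < (μ + σ) ^ 2 + ω * (μ + 2 * σ) := by positivity
  have hR : 0 < Rstar := by
    have := sub_pos.2 hcond
    rw [hRstar]; positivity
  have hI : 0 < Istar := by rw [hIstar]; positivity
  have hE : 0 < Estar := by rw [hEstar]; positivity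
  have hS : 0 < Sstar := by rw [hSstar]; positivity
  have hrate : β / N * Sstar = (μ + σ) ^ 2 / σ := by
    rw [hSstar]; exact seir_forceOfInfection_eq hσ.ne' hβ.ne' hN.ne'
  refine ⟨?_, ?_, ?_, ?_, hS, hE, hI, hR⟩
  · rw [hrate, hIstar, hSstar]
    exact seir_susceptible_balance hσ.ne' hβ.ne' hD.ne' Rstar hRstar
  · rw [hrate, hEstar]; field_simp; ring
  · rw [hEstar]; field_simp; ring
  · rw [hIstar]; field_simp
end

section
/- If μ > 0, ω > -μ, σ > 0, and 0 ≤ β < (μ+σ)²/σ, then all roots of the polynomial (s+μ)(s+μ+ω)((s+μ+σ)² - σβ) have negative real part; i.e., the disease-free equilibrium of the vaccination-free SEIR model (with σ = γ) is locally asymptotically stable. -/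
/-! The characteristic polynomial splits into the linear factors `s + μ`, `s + μ + ω` and the
quadratic `(s + μ + σ)² - σβ`. The linear roots are `-μ` and `-(μ + ω)`. For the quadratic,
`w := s + μ + σ` has a real square `σβ < (μ + σ)²`, so `w` is either purely imaginary or real
with `|w| < μ + σ`; in both cases `Re w < μ + σ`, i.e. `Re s < 0`. -/

namespace Complex

lemma re_lt_of_sq_eq_ofReal {w : ℂ} {c a : ℝ} (ha : 0 < a) (hc : c < a ^ 2)
    (hw : w ^ 2 = c) : w.re < a := by
  have hre : w.re ^ 2 - w.im ^ 2 = c := by simpa [sq] using congrArg re hw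
  have him : w.re * w.im = 0 := by
    have : w.re * w.im + w.im * w.re = 0 := by simpa [sq] using congrArg im hw
    linarith
  rcases mul_eq_zero.mp him with h0 | h0
  · linarith
  · rw [h0] at hre
    exact lt_of_pow_lt_pow_left₀ 2 ha.le (by linarith)

lemma re_neg_of_add_ofReal_eq_zero {s : ℂ} {a : ℝ} (ha : 0 < a) (h : s + a = 0) :
    s.re < 0 := by
  have : s.re + a = 0 := by simpa using congrArg re h
  linarith

end Complex

theorem seir_disease_free_stable_general
    (μ ω σ β : ℝ)
    (hμ : 0 < μ) (hω : -μ < ω) (hσ : 0 < σ) (hβ : β < (μ + σ) ^ 2 / σ) :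
    ∀ s : ℂ,
      (s + (μ : ℂ)) * (s + (μ : ℂ) + (ω : ℂ)) *
        ((s + (μ : ℂ) + (σ : ℂ)) ^ 2 - (σ : ℂ) * (β : ℂ)) = 0 →
      s.re < 0 := by
  intro s hs
  rcases mul_eq_zero.mp hs with hlin | hquad
  · rcases mul_eq_zero.mp hlin with hμroot | hωroot
    · exact Complex.re_neg_of_add_ofReal_eq_zero hμ hμroot
    · refine Complex.re_neg_of_add_ofReal_eq_zero (a := μ + ω) (by linarith) ?_
      push_cast
      rwa [← add_assoc]
  · have hσβ : σ * β < (μ + σ) ^ 2 := by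
      rw [lt_div_iff₀ hσ] at hβ
      linarith
    have hw := Complex.re_lt_of_sq_eq_ofReal (w := s + μ + σ) (by linarith) hσβ
      (by push_cast; exact sub_eq_zero.mp hquad)
    simp only [Complex.add_re, Complex.ofReal_re] at hw
    linarith

/-- Local asymptotic stability of the disease-free equilibrium: all roots of the
characteristic polynomial have negative real part. -/
theorem seir_disease_free_stable
    (μ ω σ β : ℝ)
    (hμ : 0 < μ) (hω : -μ < ω) (hσ : 0 < σ) (hβ0 : 0 ≤ β) (hβ : β < (μ + σ) ^ 2 / σ) :
    ∀ s : ℂ,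
      (s + (μ : ℂ)) * (s + (μ : ℂ) + (ω : ℂ)) *
        ((s + (μ : ℂ) + (σ : ℂ)) ^ 2 - (σ : ℂ) * (β : ℂ)) = 0 →
      s.re < 0 :=
  seir_disease_free_stable_general μ ω σ β hμ hω hσ hβ
end
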